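/- arXiv:2404.02369 — 4 statements merged into one kernel-verified Lean document; each statement's English description precedes it below -/
import Mathlib

section
/- For integers d,k,m ≥ 2 with d ≥ k, the number of collinear k-tuples of points in the grid [m]^d = {0,1,...,m-1}^d is O(m^{2d}), where the implicit constant may depend on d and k but not m. -/
/-!
Let `f₀, …, f_{k-1}` be distinct collinear points of `[m]^d`. Write `f₁ - f₀ = g • w` with `w`
primitive; a Bézout combination `∑ uᵢ wᵢ = 1` turns the real collinearity into
`f_j = f₀ + c_j • w` with integers `c_j`, `c₀ = 0` and `|c_j| · ‖w‖∞ ≤ m - 1`. So the tuples are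
counted by triples `(f₀, w, c)`. For `‖w‖∞ = s` there are `O(s^{d-1})` directions and
`O(m/s)^{k-1} ≤ O(m/s)^{d-1}` coefficient vectors (this is where `k ≤ d` enters), i.e. `O(m^{d-1})`
pairs `(w, c)` for each `s < m`; summing over `s` and over `f₀` gives `O(m^{2d})`.
-/

/-- Number of collinear `k`-tuples (ordered tuples of distinct points on a common
line) in the grid `[m]^d`. -/
noncomputable def collinearTuples (d k m : ℕ) : ℕ :=
  Nat.card {f : Fin k → (Fin d → ℤ) // Function.Injective f ∧
    (∀ j i, 0 ≤ f j i ∧ f j i < (m : ℤ)) ∧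
    Collinear ℝ (Set.range (fun j => fun i => ((f j i : ℝ))))}

open Finset

namespace CollinearTuples

variable {ι κ : Type*} [Fintype ι]

def supNorm (w : ι → ℤ) : ℕ := univ.sup fun i => (w i).natAbs

lemma natAbs_le_supNorm (w : ι → ℤ) (i : ι) : (w i).natAbs ≤ supNorm w :=
  le_sup (f := fun i => (w i).natAbs) (mem_univ i)

lemma supNorm_le_iff {w : ι → ℤ} {N : ℕ} : supNorm w ≤ N ↔ ∀ i, (w i).natAbs ≤ N := by
  simp [supNorm]

lemma supNorm_eq_zero_iff {w : ι → ℤ} : supNorm w = 0 ↔ w = 0 := by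
  rw [← Nat.le_zero, supNorm_le_iff]
  simp [funext_iff]

lemma exists_supNorm_eq [Nonempty ι] (w : ι → ℤ) : ∃ i, (w i).natAbs = supNorm w := by
  obtain ⟨i, -, hi⟩ := exists_mem_eq_sup univ univ_nonempty fun i => (w i).natAbs
  exact ⟨i, hi.symm⟩

lemma eq_sum_mul_smul_of_cast_eq_mul {w u x : ι → ℤ} (hu : ∑ i, w i * u i = 1) {t : ℝ}
    (hx : ∀ i, (x i : ℝ) = t * w i) : x = (∑ i, x i * u i) • w := by
  have ht : t = ∑ i, (x i : ℝ) * u i := by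
    calc t = t * ((∑ i, w i * u i : ℤ) : ℝ) := by rw [hu, Int.cast_one, mul_one]
      _ = ∑ i, (x i : ℝ) * u i := by
        push_cast
        rw [mul_sum]
        exact sum_congr rfl fun i _ => by rw [hx i, mul_assoc]
  funext i
  have h := hx i
  rw [ht] at h
  simp only [Pi.smul_apply, smul_eq_mul]
  exact_mod_cast h

theorem exists_eq_add_smul_of_collinear (f : κ → ι → ℤ)
    (hf : Collinear ℝ (Set.range fun j i => (f j i : ℝ))) (a : κ) :
    ∃ (w : ι → ℤ) (c : κ → ℤ), c a = 0 ∧ ∀ j, f j = f a + c j • w := by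
  by_cases! hconst : ∀ j, f j = f a
  · exact ⟨0, 0, rfl, fun j => by simp [hconst j]⟩
  obtain ⟨b, hb⟩ := hconst
  obtain ⟨i₀, hi₀⟩ : ∃ i, (f b - f a) i ≠ 0 := by
    by_contra! h
    exact hb (sub_eq_zero.mp (funext h))
  obtain ⟨w, hvw, hw⟩ := extract_gcd (f b - f a) ⟨i₀, mem_univ _⟩
  obtain ⟨u, hu⟩ := univ.gcd_eq_sum_mul w
  obtain ⟨e, he⟩ := (collinear_iff_of_mem (Set.mem_range_self a)).mp hf
  choose r hr using fun j => he _ (Set.mem_range_self j)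
  have hdiff : ∀ j i, ((f j i - f a i : ℤ) : ℝ) = r j * e i := fun j i => by
    have := congrFun (hr j) i
    simp only [Pi.vadd_apply', vadd_eq_add, Pi.smul_apply, smul_eq_mul] at this
    push_cast
    linarith
  have hrb : r b ≠ 0 := by
    intro h
    have h0 := (hdiff b i₀).trans (by rw [h, zero_mul])
    exact hi₀ (by exact_mod_cast h0)
  refine ⟨w, fun j => ∑ i, (f j i - f a i) * u i, by simp, fun j => ?_⟩
  rw [← sub_eq_iff_eq_add']
  refine eq_sum_mul_smul_of_cast_eq_mul (hw ▸ hu).symm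
    (t := r j / r b * (univ.gcd (f b - f a) : ℤ)) fun i => ?_
  have hv : ((f b i - f a i : ℤ) : ℝ) = univ.gcd (f b - f a) * w i := by
    exact_mod_cast hvw i (mem_univ i)
  rw [Pi.sub_apply, hdiff j i, mul_assoc, ← hv, hdiff b i]
  field_simp

lemma natAbs_mul_supNorm_le {m : ℕ} {p q w : ι → ℤ} {c : ℤ} (hp : ∀ i, 0 ≤ p i ∧ p i < m)
    (hq : ∀ i, 0 ≤ q i ∧ q i < m) (h : q = p + c • w) : c.natAbs * supNorm w ≤ m - 1 := by
  rcases eq_or_ne c 0 with rfl | hc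
  · simp
  rw [mul_comm, ← Nat.le_div_iff_mul_le (Int.natAbs_pos.mpr hc), supNorm_le_iff]
  intro i
  rw [Nat.le_div_iff_mul_le (Int.natAbs_pos.mpr hc), mul_comm, ← Int.natAbs_mul]
  have hi := congrFun h i
  simp only [Pi.add_apply, Pi.smul_apply, smul_eq_mul] at hi
  have := hp i
  have := hq i
  omega

variable [DecidableEq ι] [Fintype κ] [DecidableEq κ]

lemma card_piFinset_ite_eq {α : Type*} (a : κ) (A B : Finset α) :
    #(Fintype.piFinset fun j => if j = a then A else B) = #A * #B ^ (Fintype.card κ - 1) := by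
  rw [Fintype.card_piFinset, ← mul_prod_erase univ _ (mem_univ a), if_pos rfl,
    prod_congr rfl fun j hj => by rw [if_neg (ne_of_mem_erase hj)], prod_const,
    card_erase_of_mem (mem_univ a), card_univ]

variable (ι) in
noncomputable def sphere (s : ℕ) : Finset (ι → ℤ) :=
  (Fintype.piFinset fun _ : ι => Icc (-(s : ℤ)) s).filter fun w => supNorm w = s

noncomputable def coeffBox (a : κ) (N : ℕ) : Finset (κ → ℤ) :=
  Fintype.piFinset fun j => if j = a then {0} else Icc (-(N : ℤ)) N

lemma card_coeffBox (a : κ) (N : ℕ) : #(coeffBox a N) = (2 * N + 1) ^ (Fintype.card κ - 1) := by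
  rw [coeffBox, card_piFinset_ite_eq, card_singleton, one_mul, Int.card_Icc]
  congr 1
  omega

lemma card_sphere_le [Nonempty ι] (s : ℕ) :
    #(sphere ι s) ≤ 2 * Fintype.card ι * (2 * s + 1) ^ (Fintype.card ι - 1) := by
  have hsub : sphere ι s ⊆ univ.biUnion fun i => Fintype.piFinset fun j =>
      if j = i then ({-(s : ℤ), (s : ℤ)} : Finset ℤ) else Icc (-(s : ℤ)) s := by
    intro w hw
    simp only [sphere, mem_filter, Fintype.mem_piFinset] at hw
    obtain ⟨i, hi⟩ := exists_supNorm_eq w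
    simp only [mem_biUnion, mem_univ, true_and, Fintype.mem_piFinset]
    refine ⟨i, fun j => ?_⟩
    split_ifs with hj
    · subst hj
      simp only [mem_insert, mem_singleton]
      omega
    · exact hw.1 j
  calc #(sphere ι s) ≤ ∑ i : ι, 2 * (2 * s + 1) ^ (Fintype.card ι - 1) := by
        refine (card_le_card hsub).trans (card_biUnion_le.trans (sum_le_sum fun i _ => ?_))
        rw [card_piFinset_ite_eq, Int.card_Icc]
        gcongr
        · exact card_le_two
        · omega
    _ = 2 * Fintype.card ι * (2 * s + 1) ^ (Fintype.card ι - 1) := by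
        rw [sum_const, card_univ, smul_eq_mul]
        ring

noncomputable def lineTuples (a : κ) (m : ℕ) : Finset (κ → ι → ℤ) :=
  (Fintype.piFinset fun _ : ι => Ico (0 : ℤ) m).biUnion fun p =>
    (Icc 1 (m - 1)).biUnion fun s =>
      (sphere ι s).biUnion fun w =>
        (coeffBox a ((m - 1) / s)).image fun c j => p + c j • w

lemma mem_lineTuples_of_collinear {a b : κ} (hab : a ≠ b) {m : ℕ} {f : κ → ι → ℤ}
    (hf : Function.Injective f) (hbox : ∀ j i, 0 ≤ f j i ∧ f j i < m)
    (hcol : Collinear ℝ (Set.range fun j i => (f j i : ℝ))) : f ∈ lineTuples a m := by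
  obtain ⟨w, c, hca, hc⟩ := exists_eq_add_smul_of_collinear f hcol a
  have hcw j : (c j).natAbs * supNorm w ≤ m - 1 := natAbs_mul_supNorm_le (hbox a) (hbox j) (hc j)
  have hcb : c b ≠ 0 := fun h => hab (hf (by rw [hc b, h, zero_smul, add_zero]))
  have hw : w ≠ 0 := fun h => hab (hf (by rw [hc b, h, smul_zero, add_zero]))
  have hs : 1 ≤ supNorm w := Nat.one_le_iff_ne_zero.mpr (supNorm_eq_zero_iff.not.mpr hw)
  have hsm : supNorm w ≤ m - 1 :=
    (Nat.le_mul_of_pos_left _ (Int.natAbs_pos.mpr hcb)).trans (hcw b)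
  simp only [lineTuples, mem_biUnion, mem_image]
  refine ⟨f a, ?_, supNorm w, mem_Icc.mpr ⟨hs, hsm⟩, w, ?_, c, ?_, funext fun j => (hc j).symm⟩
  · simpa [Fintype.mem_piFinset] using hbox a
  · refine mem_filter.mpr ⟨Fintype.mem_piFinset.mpr fun i => mem_Icc.mpr ?_, rfl⟩
    have := natAbs_le_supNorm w i
    omega
  · simp only [coeffBox, Fintype.mem_piFinset]
    intro j
    split_ifs with hj
    · simp [hj, hca]
    · have := (Nat.le_div_iff_mul_le hs).mpr (hcw j)
      rw [mem_Icc]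
      omega

lemma card_lineTuples_le (a : κ) (m : ℕ) :
    #(lineTuples (ι := ι) a m) ≤ m ^ Fintype.card ι *
      ∑ s ∈ Icc 1 (m - 1), #(sphere ι s) * (2 * ((m - 1) / s) + 1) ^ (Fintype.card κ - 1) := by
  calc #(lineTuples (ι := ι) a m)
      ≤ ∑ p ∈ Fintype.piFinset fun _ : ι => Ico (0 : ℤ) m, ∑ s ∈ Icc 1 (m - 1),
          ∑ w ∈ sphere ι s, #((coeffBox a ((m - 1) / s)).image fun c j => p + c j • w) :=
        card_biUnion_le.trans <| sum_le_sum fun _ _ =>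
          card_biUnion_le.trans <| sum_le_sum fun _ _ => card_biUnion_le
    _ ≤ ∑ p ∈ Fintype.piFinset fun _ : ι => Ico (0 : ℤ) m, ∑ s ∈ Icc 1 (m - 1),
          ∑ w ∈ sphere ι s, #(coeffBox a ((m - 1) / s)) := by
        gcongr
        exact card_image_le
    _ = _ := by simp [card_coeffBox, Fintype.card_piFinset]

lemma sum_card_sphere_mul_le [Nonempty ι] {k : ℕ} (hk : k ≤ Fintype.card ι) (m : ℕ) :
    ∑ s ∈ Icc 1 (m - 1), #(sphere ι s) * (2 * ((m - 1) / s) + 1) ^ (k - 1) ≤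
      2 * Fintype.card ι * 9 ^ (Fintype.card ι - 1) * m ^ Fintype.card ι := by
  set d := Fintype.card ι
  have hd : 0 < d := Fintype.card_pos
  have hterm : ∀ s ∈ Icc 1 (m - 1), #(sphere ι s) * (2 * ((m - 1) / s) + 1) ^ (k - 1) ≤
      2 * d * 9 ^ (d - 1) * m ^ (d - 1) := by
    intro s hs
    rw [mem_Icc] at hs
    have hN : 1 ≤ (m - 1) / s := (Nat.one_le_div_iff (by omega)).mpr hs.2
    have hsN : s * ((m - 1) / s) ≤ m := (Nat.mul_div_le _ _).trans (Nat.sub_le _ _)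
    calc #(sphere ι s) * (2 * ((m - 1) / s) + 1) ^ (k - 1)
        ≤ 2 * d * (2 * s + 1) ^ (d - 1) * (2 * ((m - 1) / s) + 1) ^ (d - 1) := by
          gcongr
          · exact card_sphere_le s
          · omega
      _ = 2 * d * ((2 * s + 1) * (2 * ((m - 1) / s) + 1)) ^ (d - 1) := by rw [mul_assoc, mul_pow]
      _ ≤ 2 * d * (9 * m) ^ (d - 1) := by
          -- `(2s + 1)(2N + 1) ≤ 9sN` as `s, N ≥ 1`
          gcongr 2 * d * ?_ ^ _
          nlinarith
      _ = 2 * d * 9 ^ (d - 1) * m ^ (d - 1) := by ring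
  calc ∑ s ∈ Icc 1 (m - 1), #(sphere ι s) * (2 * ((m - 1) / s) + 1) ^ (k - 1)
      ≤ (m - 1) * (2 * d * 9 ^ (d - 1) * m ^ (d - 1)) := by
        simpa using sum_le_sum hterm
    _ ≤ m * (2 * d * 9 ^ (d - 1) * m ^ (d - 1)) := by gcongr; omega
    _ = 2 * d * 9 ^ (d - 1) * m ^ d := by
        rw [← Nat.sub_add_cancel hd, pow_succ]
        simp only [Nat.add_sub_cancel]
        ring

theorem natCard_collinear_le {a b : κ} (hab : a ≠ b) (hκ : Fintype.card κ ≤ Fintype.card ι)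
    (m : ℕ) :
    Nat.card {f : κ → ι → ℤ // Function.Injective f ∧ (∀ j i, 0 ≤ f j i ∧ f j i < m) ∧
      Collinear ℝ (Set.range fun j i => (f j i : ℝ))} ≤
      2 * Fintype.card ι * 9 ^ (Fintype.card ι - 1) * m ^ (2 * Fintype.card ι) := by
  have : Nonempty ι := Fintype.card_pos_iff.mp <| by
    have := Fintype.one_lt_card_iff.mpr ⟨a, b, hab⟩
    omega
  calc _ ≤ #(lineTuples (ι := ι) a m) := by
        rw [← Nat.card_eq_finsetCard]
        exact Nat.card_le_card_of_injective (fun f => ⟨f.1, mem_lineTuples_of_collinear hab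
          f.2.1 f.2.2.1 f.2.2.2⟩) fun f g h => Subtype.ext (Subtype.mk.inj h)
    _ ≤ m ^ Fintype.card ι * (2 * Fintype.card ι * 9 ^ (Fintype.card ι - 1) * m ^ Fintype.card ι) :=
        (card_lineTuples_le a m).trans (Nat.mul_le_mul_left _ (sum_card_sphere_mul_le hκ m))
    _ = _ := by ring

end CollinearTuples

/-- For `2 ≤ k ≤ d`, the number of collinear `k`-tuples in `[m]^d` is `O(m^{2d})`. -/
theorem stmt0 (d k : ℕ) (hk : 2 ≤ k) (hkd : k ≤ d) :
    ∃ C : ℝ, 0 < C ∧ ∀ m : ℕ, 2 ≤ m →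
      (collinearTuples d k m : ℝ) ≤ C * (m : ℝ) ^ (2 * d) := by
  have hd : 0 < d := by omega
  refine ⟨2 * d * 9 ^ (d - 1), by positivity, fun m _ => ?_⟩
  have h := CollinearTuples.natCard_collinear_le (ι := Fin d) (a := (⟨0, by omega⟩ : Fin k))
    (b := ⟨1, by omega⟩) (by simp [Fin.ext_iff]) (by simpa using hkd) m
  simp only [Fintype.card_fin] at h
  exact_mod_cast h
end

section
/- For integers d ≥ 2, m ≥ 2, and k = d+1, the number of collinear k-tuples of points in [m]^d is O(m^{d+k-1} log m) = O(m^{2d} log m), where the implicit constant may depend on d but not m. -/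
/-!
A collinear tuple of lattice points is `f j = f 0 + c j • v`, where `v` is the primitive
integer vector along `f 1 - f 0`, so it is determined by the code `(f 0, v, (c j)_{j ≠ 0})`.
If `‖v‖∞ = h`, then `1 ≤ h ≤ m - 1`, there are at most `2d (2h+1)^(d-1)` choices of `v`, and
every `|c j| ≤ (m - 1) / h`. For `k = d + 1` points this leaves `O(m^d · h^(d-1) · (m/h)^d)
= O(m^(2d) / h)` codes with `‖v‖∞ = h`, and summing the harmonic series over `h < m` gives
the factor `log m`.
-/

open Finset

theorem exists_eq_smul_of_gcd_eq_one {ι : Type*} [Fintype ι] {u v : ι → ℤ}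
    (hv : univ.gcd v = 1) (huv : ∀ i i', u i * v i' = u i' * v i) : ∃ c : ℤ, u = c • v := by
  obtain ⟨g, hg⟩ := univ.gcd_eq_sum_mul v
  refine ⟨∑ a, u a * g a, funext fun i => ?_⟩
  calc u i = u i * ∑ a, v a * g a := by rw [← hg, hv, mul_one]
    _ = (∑ a, u a * g a) * v i := by
      rw [mul_sum, sum_mul]
      exact sum_congr rfl fun a _ => by rw [← mul_assoc, huv]; ring

theorem exists_gcd_eq_one_smul_eq {ι : Type*} [Fintype ι] {w : ι → ℤ} (hw : w ≠ 0) :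
    ∃ (g : ℤ) (v : ι → ℤ), univ.gcd v = 1 ∧ w = g • v := by
  obtain ⟨i, -⟩ := Function.ne_iff.mp hw
  obtain ⟨v, hwv, hv⟩ := univ.extract_gcd w ⟨i, mem_univ i⟩
  exact ⟨_, v, hv, funext fun i => hwv i (mem_univ i)⟩

theorem cross_mul_eq_of_collinear {ι : Type*} {d : ℕ} {f : ι → Fin d → ℤ}
    (hcol : Collinear ℝ (Set.range fun j i => (f j i : ℝ))) (a b j : ι) (i i' : Fin d) :
    (f j i - f a i) * (f b i' - f a i') = (f j i' - f a i') * (f b i - f a i) := by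
  obtain ⟨dir, hdir⟩ := (collinear_iff_of_mem (Set.mem_range_self a)).mp hcol
  choose t ht using fun j => hdir _ (Set.mem_range_self j)
  have hdiff : ∀ j i, ((f j i - f a i : ℤ) : ℝ) = (t j - t a) * dir i := fun j i => by
    have hj := congrFun (ht j) i
    have ha := congrFun (ht a) i
    simp only [vadd_eq_add, Pi.add_apply, Pi.smul_apply, smul_eq_mul] at hj ha
    push_cast
    linarith
  apply Int.cast_injective (α := ℝ)
  simp only [Int.cast_mul, hdiff]
  ring

theorem exists_direction_of_collinear {ι : Type*} {d : ℕ} {f : ι → Fin d → ℤ}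
    (hcol : Collinear ℝ (Set.range fun j i => (f j i : ℝ))) {a b : ι} (hab : f a ≠ f b) :
    ∃ v : Fin d → ℤ, v ≠ 0 ∧ (∀ i, |v i| ≤ |f b i - f a i|) ∧
      ∃ c : ι → ℤ, ∀ j, f j = f a + c j • v := by
  obtain ⟨g, v, hv, hw⟩ := exists_gcd_eq_one_smul_eq (sub_ne_zero.mpr hab.symm)
  have hg : g ≠ 0 := by
    rintro rfl
    exact hab (sub_eq_zero.mp (by simpa using hw)).symm
  have hwi : ∀ i, f b i - f a i = g * v i := fun i => congrFun hw i
  have hc : ∀ j, ∃ c : ℤ, f j - f a = c • v := fun j =>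
    exists_eq_smul_of_gcd_eq_one hv fun i i' => mul_left_cancel₀ hg <| by
      have := cross_mul_eq_of_collinear hcol a b j i i'
      rw [hwi, hwi] at this
      simp only [Pi.sub_apply]
      linear_combination this
  choose c hc using hc
  refine ⟨v, fun h => hab ?_, fun i => ?_, c, fun j => eq_add_of_sub_eq' (hc j)⟩
  · rw [h, smul_zero] at hw
    exact (sub_eq_zero.mp hw).symm
  · rw [hwi, abs_mul]
    exact le_mul_of_one_le_left (abs_nonneg _) (Int.one_le_abs hg)

noncomputable def supNormSphere (d h : ℕ) : Finset (Fin d → ℤ) :=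
  Fintype.piFinset (fun _ => Icc (-h : ℤ) h) \ Fintype.piFinset (fun _ => Icc (-h + 1 : ℤ) (h - 1))

theorem mem_supNormSphere {d h : ℕ} {v : Fin d → ℤ} :
    v ∈ supNormSphere d h ↔ (∀ i, |v i| ≤ h) ∧ ∃ i, |v i| = h := by
  simp only [supNormSphere, mem_sdiff, Fintype.mem_piFinset, mem_Icc, abs_le, not_forall]
  exact and_congr_right fun hle => exists_congr fun i => by grind

theorem exists_mem_supNormSphere {d : ℕ} {v : Fin d → ℤ} (hv : v ≠ 0) :
    ∃ h, v ∈ supNormSphere d h := by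
  obtain ⟨i₀, -⟩ := Function.ne_iff.mp hv
  obtain ⟨i, -, hi⟩ := exists_mem_eq_sup univ ⟨i₀, mem_univ _⟩ fun i => (v i).natAbs
  refine ⟨(v i).natAbs, mem_supNormSphere.mpr ⟨fun j => ?_, i, Int.abs_eq_natAbs _⟩⟩
  rw [Int.abs_eq_natAbs, ← hi]
  exact_mod_cast le_sup (f := fun i => (v i).natAbs) (mem_univ j)

theorem card_supNormSphere_le (d : ℕ) {h : ℕ} (hh : 1 ≤ h) :
    #(supNormSphere d h) ≤ 2 * d * (2 * h + 1) ^ (d - 1) := by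
  have hsub : Fintype.piFinset (fun _ : Fin d => Icc (-h + 1 : ℤ) (h - 1)) ⊆
      Fintype.piFinset fun _ => Icc (-h : ℤ) h :=
    Fintype.piFinset_subset _ _ fun _ => Icc_subset_Icc (by omega) (by omega)
  rw [supNormSphere, card_sdiff_of_subset hsub]
  simp only [Fintype.card_piFinset, Int.card_Icc, prod_const, card_univ, Fintype.card_fin]
  grind [abs_pow_sub_pow_le (α := ℤ) (2 * h + 1) (2 * h - 1) d]

/-- The code `(p, v, c)` stands for the tuple `p, p + c 0 • v, p + c 1 • v, …` in `[m]^d`. -/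
noncomputable def collinearCodes (d n m : ℕ) :
    Finset ((Fin d → ℤ) × (Fin d → ℤ) × (Fin n → ℤ)) :=
  (Icc 1 (m - 1)).biUnion fun h =>
    Fintype.piFinset (fun _ => Ico 0 (m : ℤ)) ×ˢ supNormSphere d h ×ˢ
      Fintype.piFinset fun _ => Icc (-((m - 1) / h : ℕ) : ℤ) ((m - 1) / h : ℕ)

theorem card_collinearCodes_le (d n m : ℕ) :
    #(collinearCodes d n m) ≤ ∑ h ∈ Icc 1 (m - 1),
      m ^ d * (2 * d * (2 * h + 1) ^ (d - 1)) * (2 * ((m - 1) / h) + 1) ^ n := by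
  refine card_biUnion_le.trans (sum_le_sum fun h hh => ?_)
  rw [card_product, card_product, ← mul_assoc]
  gcongr
  · simp
  · exact card_supNormSphere_le d (mem_Icc.mp hh).1
  · simp only [Fintype.card_piFinset, Int.card_Icc, prod_const, card_univ, Fintype.card_fin]
    exact Nat.pow_le_pow_left (by omega) n

theorem exists_mem_collinearCodes {d n m : ℕ} {f : Fin (n + 2) → Fin d → ℤ}
    (hinj : Function.Injective f) (hgrid : ∀ j i, 0 ≤ f j i ∧ f j i < (m : ℤ))
    (hcol : Collinear ℝ (Set.range fun j i => (f j i : ℝ))) :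
    ∃ v c, (f 0, v, c) ∈ collinearCodes d (n + 1) m ∧ ∀ j, f j.succ = f 0 + c j • v := by
  obtain ⟨v, hv0, hvle, c, hc⟩ :=
    exists_direction_of_collinear hcol (hinj.ne (zero_ne_one (α := Fin (n + 2))))
  obtain ⟨h, hh⟩ := exists_mem_supNormSphere hv0
  obtain ⟨hle, i, hi⟩ := mem_supNormSphere.mp hh
  have hdiff : ∀ j, |f j i - f 0 i| ≤ (m : ℤ) - 1 := fun j => by
    have := hgrid j i
    have := hgrid 0 i
    rw [abs_le]
    omega
  have hh1 : 1 ≤ h := by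
    obtain ⟨i₀, hi₀⟩ := Function.ne_iff.mp hv0
    have := hle i₀
    have := Int.one_le_abs hi₀
    omega
  have hhm : h ≤ m - 1 := by
    have := hvle i
    have := hdiff 1
    omega
  have hcoef : ∀ j, |c j| ≤ ((m - 1) / h : ℕ) := fun j => by
    have hcv : c j * v i = f j i - f 0 i := by simp [hc j]
    have : (c j).natAbs * h ≤ m - 1 := by
      have := hdiff j
      rw [← hcv, abs_mul, hi, Int.abs_eq_natAbs] at this
      omega
    rw [Int.abs_eq_natAbs]
    exact_mod_cast (Nat.le_div_iff_mul_le hh1).mpr this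
  refine ⟨v, fun j => c j.succ, ?_, fun j => hc _⟩
  simp only [collinearCodes, mem_biUnion, mem_product, Fintype.mem_piFinset, mem_Ico, mem_Icc]
  exact ⟨h, ⟨hh1, hhm⟩, fun i => hgrid 0 i, hh, fun j => abs_le.mp (hcoef _)⟩

theorem collinearTuples_le_card_collinearCodes (d n m : ℕ) :
    collinearTuples d (n + 2) m ≤ #(collinearCodes d (n + 1) m) := by
  choose v c hmem hc using fun s : {f : Fin (n + 2) → Fin d → ℤ // Function.Injective f ∧
      (∀ j i, 0 ≤ f j i ∧ f j i < (m : ℤ)) ∧ Collinear ℝ (Set.range fun j i => (f j i : ℝ))} =>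
    exists_mem_collinearCodes s.2.1 s.2.2.1 s.2.2.2
  rw [collinearTuples, ← Nat.card_eq_finsetCard]
  refine Nat.card_le_card_of_injective (fun s => ⟨(s.1 0, v s, c s), hmem s⟩) fun s t hst => ?_
  simp only [Subtype.mk.injEq, Prod.mk.injEq] at hst
  obtain ⟨h0, hv, hc'⟩ := hst
  refine Subtype.ext (funext fun j => Fin.cases h0 (fun j => ?_) j)
  rw [hc s, hc t, h0, hv, hc']

theorem two_mul_div_add_one_le {m h : ℕ} (hh : 1 ≤ h) (hhm : h ≤ m) :
    (2 * ((m - 1) / h : ℕ) + 1 : ℝ) ≤ 3 * m / h := by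
  have hq : (((m - 1) / h : ℕ) : ℝ) * h ≤ m := by
    exact_mod_cast (Nat.div_mul_le_self _ _).trans (Nat.sub_le m 1)
  have : (h : ℝ) ≤ m := by exact_mod_cast hhm
  rw [le_div_iff₀ (by exact_mod_cast hh)]
  linarith

theorem card_collinearCodes_summand_le {d m h : ℕ} (hh : 1 ≤ h) (hhm : h ≤ m) :
    ((m ^ d * (2 * d * (2 * h + 1) ^ (d - 1)) * (2 * ((m - 1) / h) + 1) ^ d : ℕ) : ℝ) ≤
      2 * d * 3 ^ (2 * d - 1) * m ^ (2 * d) * (h : ℝ)⁻¹ := by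
  obtain _ | d := d
  · simp
  have h3h : (2 * h + 1 : ℝ) ≤ 3 * h := by
    have : (1 : ℝ) ≤ h := by exact_mod_cast hh
    linarith
  push_cast
  calc (m : ℝ) ^ (d + 1) * (2 * ((d : ℝ) + 1) * (2 * h + 1) ^ d) *
        (2 * ((m - 1) / h : ℕ) + 1) ^ (d + 1)
      ≤ m ^ (d + 1) * (2 * ((d : ℝ) + 1) * (3 * h) ^ d) * (3 * m / h) ^ (d + 1) := by
        gcongr
        exact two_mul_div_add_one_le hh hhm
    _ = 2 * ((d : ℝ) + 1) * 3 ^ (2 * (d + 1) - 1) * m ^ (2 * (d + 1)) * (h : ℝ)⁻¹ := by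
        rw [show 2 * (d + 1) - 1 = d + (d + 1) by omega, two_mul, div_pow, mul_pow, mul_pow,
          pow_add, pow_add, pow_add]
        field_simp
        ring

theorem collinearTuples_succ_le_mul_sum_inv {d : ℕ} (hd : 1 ≤ d) (m : ℕ) :
    (collinearTuples d (d + 1) m : ℝ) ≤
      2 * d * 3 ^ (2 * d - 1) * m ^ (2 * d) * ∑ h ∈ Icc 1 (m - 1), (h : ℝ)⁻¹ := by
  obtain ⟨n, rfl⟩ : ∃ n, d = n + 1 := ⟨d - 1, by omega⟩
  refine (Nat.cast_le.mpr ((collinearTuples_le_card_collinearCodes (n + 1) n m).trans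
    (card_collinearCodes_le _ _ m))).trans ?_
  rw [mul_sum]
  push_cast
  refine sum_le_sum fun h hh => ?_
  have := mem_Icc.mp hh
  exact_mod_cast card_collinearCodes_summand_le this.1 (by omega)

theorem sum_inv_Icc_le_three_mul_log {m : ℕ} (hm : 2 ≤ m) :
    ∑ h ∈ Icc 1 (m - 1), (h : ℝ)⁻¹ ≤ 3 * Real.log m := by
  have hlog2 : 1 / 2 ≤ Real.log m := calc
    1 / 2 ≤ Real.log 2 := by linarith [Real.log_two_gt_d9]
    _ ≤ Real.log m := Real.log_le_log two_pos (by exact_mod_cast hm)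
  have hlog : Real.log (m - 1 : ℕ) ≤ Real.log m :=
    Real.log_le_log (by norm_cast; omega) (by exact_mod_cast Nat.sub_le m 1)
  calc ∑ h ∈ Icc 1 (m - 1), (h : ℝ)⁻¹ = harmonic (m - 1) := by
        rw [harmonic_eq_sum_Icc]; push_cast; rfl
    _ ≤ 1 + Real.log (m - 1 : ℕ) := harmonic_le_one_add_log _
    _ ≤ 3 * Real.log m := by linarith

/-- For `k = d + 1`, the number of collinear `k`-tuples in `[m]^d` is
`O(m^{d+k-1} log m) = O(m^{2d} log m)`. -/
theorem stmt1 (d : ℕ) (hd : 2 ≤ d) :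
    ∃ C : ℝ, 0 < C ∧ ∀ m : ℕ, 2 ≤ m →
      (collinearTuples d (d + 1) m : ℝ) ≤ C * (m : ℝ) ^ (2 * d) * Real.log m := by
  have hd0 : (0 : ℝ) < d := by exact_mod_cast (by omega : 0 < d)
  refine ⟨3 * (2 * d * 3 ^ (2 * d - 1)), by positivity, fun m hm => ?_⟩
  calc (collinearTuples d (d + 1) m : ℝ)
      ≤ 2 * d * 3 ^ (2 * d - 1) * m ^ (2 * d) * ∑ h ∈ Icc 1 (m - 1), (h : ℝ)⁻¹ :=
        collinearTuples_succ_le_mul_sum_inv (by omega) m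
    _ ≤ 2 * d * 3 ^ (2 * d - 1) * m ^ (2 * d) * (3 * Real.log m) := by
        gcongr
        exact sum_inv_Icc_le_three_mul_log hm
    _ = 3 * (2 * d * 3 ^ (2 * d - 1)) * m ^ (2 * d) * Real.log m := by ring
end

section
/- For integers d,m ≥ 2 and k ≥ d+2, the number of collinear k-tuples of points in [m]^d is O(m^{d+k-1}), where the implicit constant may depend on d and k but not m. -/
open Finset

lemma exists_dir {d k : ℕ} (m : ℕ) (j0 j1 : Fin k) (hne : j0 ≠ j1)
    (f : Fin k → Fin d → ℤ)
    (hinj : Function.Injective f)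
    (hb : ∀ j i, 0 ≤ f j i ∧ f j i < (m : ℤ))
    (hcol : Collinear ℝ (Set.range (fun j => fun i => ((f j i : ℝ))))) :
    ∃ wn : (Fin d → ℤ) × (Fin k → ℤ),
      wn.1 ≠ 0 ∧ (∀ i, |wn.1 i| ≤ (m : ℤ) - 1) ∧
      wn.2 j0 = 0 ∧ (∀ j, |wn.2 j| ≤ (m : ℤ) - 1) ∧
      (∀ j i, |wn.2 j * wn.1 i| ≤ (m : ℤ) - 1) ∧
      (∀ j i, f j i = f j0 i + wn.2 j * wn.1 i) := by
  classical
  set F : Fin k → Fin d → ℝ := fun j i => (f j i : ℝ) with hF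
  have h0mem : F j0 ∈ Set.range F := ⟨j0, rfl⟩
  obtain ⟨u, hu⟩ := (collinear_iff_of_mem h0mem).mp hcol
  choose r hr using fun j => hu (F j) ⟨j, rfl⟩
  set v : Fin k → Fin d → ℤ := fun j i => f j i - f j0 i with hv
  have hvr : ∀ j i, (v j i : ℝ) = r j * u i := by
    intro j i
    have := congrFun (hr j) i
    simp only [Pi.add_apply, Pi.smul_apply, smul_eq_mul, vadd_eq_add] at this
    simp only [hv, hF] at this ⊢
    push_cast
    linarith [this]
  have hcross : ∀ j i i', v j i * v j1 i' = v j i' * v j1 i := by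
    intro j i i'
    have : ((v j i * v j1 i' : ℤ) : ℝ) = ((v j i' * v j1 i : ℤ) : ℝ) := by
      push_cast
      rw [hvr, hvr, hvr, hvr]; ring
    exact_mod_cast this
  have hv1 : v j1 ≠ 0 := by
    intro h
    apply hne
    apply hinj
    funext i
    have := congrFun h i
    simp only [hv, Pi.zero_apply] at this
    omega
  obtain ⟨i0, hi0⟩ : ∃ i0, v j1 i0 ≠ 0 := by
    by_contra h
    push_neg at h
    exact hv1 (funext fun i => h i)
  set g : ℤ := Finset.univ.gcd (fun i => v j1 i) with hg
  have hgdvd : ∀ i, g ∣ v j1 i := fun i => Finset.gcd_dvd (mem_univ i)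
  have hg0 : g ≠ 0 := by
    intro h
    exact hi0 (Finset.gcd_eq_zero_iff.mp (hg ▸ h) i0 (mem_univ i0))
  set w : Fin d → ℤ := fun i => v j1 i / g with hw
  have hwg : ∀ i, w i * g = v j1 i := fun i => Int.ediv_mul_cancel (hgdvd i)
  have hgcdw : Finset.univ.gcd w = 1 := Finset.gcd_div_eq_one (Finset.mem_univ i0) hi0
  have hwi0 : w i0 ≠ 0 := by
    intro h
    apply hi0
    rw [← hwg i0, h, zero_mul]
  have key : ∀ j i, v j i * w i0 = v j i0 * w i := by
    intro j i
    have h1 : (v j i * w i0) * g = (v j i0 * w i) * g := by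
      rw [mul_assoc, hwg, mul_assoc, hwg]
      exact hcross j i i0
    exact mul_right_cancel₀ hg0 h1
  have hdvd : ∀ j, w i0 ∣ v j i0 := by
    intro j
    have h1 : w i0 ∣ Finset.univ.gcd (fun i => v j i0 * w i) :=
      Finset.dvd_gcd (fun i _ => ⟨v j i, by rw [← key j i]; ring⟩)
    rw [Finset.gcd_mul_left, hgcdw, mul_one] at h1
    exact dvd_normalize_iff.mp h1
  set n : Fin k → ℤ := fun j => v j i0 / w i0 with hn
  have hnw0 : ∀ j, n j * w i0 = v j i0 := fun j => Int.ediv_mul_cancel (hdvd j)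
  have hnw : ∀ j i, v j i = n j * w i := by
    intro j i
    have h1 : v j i * w i0 = (n j * w i) * w i0 := by
      rw [key j i, ← hnw0 j]; ring
    exact mul_right_cancel₀ hwi0 h1
  have hvb : ∀ j i, |v j i| ≤ (m : ℤ) - 1 := by
    intro j i
    have h1 := hb j i
    have h2 := hb j0 i
    simp only [hv]
    rw [abs_le]
    omega
  refine ⟨(w, n), ?_, ?_, ?_, ?_, ?_, ?_⟩
  · intro h
    exact hwi0 (congrFun h i0)
  · intro i
    calc |w i| ≤ |v j1 i| := Int.abs_ediv_le_abs _ _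
    _ ≤ (m : ℤ) - 1 := hvb j1 i
  · show n j0 = 0
    simp only [hn, hv, sub_self, Int.zero_ediv]
  · intro j
    have h1 : |n j| * 1 ≤ |n j| * |w i0| := by
      apply mul_le_mul_of_nonneg_left _ (abs_nonneg _)
      exact Int.one_le_abs hwi0
    calc |n j| = |n j| * 1 := (mul_one _).symm
    _ ≤ |n j| * |w i0| := h1
    _ = |n j * w i0| := (abs_mul _ _).symm
    _ = |v j i0| := by rw [hnw0]
    _ ≤ (m : ℤ) - 1 := hvb j i0
  · intro j i
    rw [← hnw j i]
    exact hvb j i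
  · intro j i
    have := hnw j i
    simp only [hv] at this
    show f j i = f j0 i + n j * w i
    omega


lemma sum_inv_sq_le (R : ℕ) : ∑ r ∈ Finset.Icc 1 R, (1:ℝ)/(r:ℝ)^2 ≤ 2 := by
  have key : ∀ R : ℕ, 1 ≤ R → ∑ r ∈ Finset.Icc 1 R, (1:ℝ)/(r:ℝ)^2 ≤ 2 - 1/(R:ℝ) := by
    intro R hR
    induction R, hR using Nat.le_induction with
    | base => norm_num
    | succ R hR ih =>
      rw [Finset.sum_Icc_succ_top (by omega)]
      have hR0 : (0:ℝ) < R := by positivity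
      have hR1 : (0:ℝ) < (R:ℝ) + 1 := by positivity
      have h2 : (1:ℝ)/((R:ℕ)+1:ℝ)^2 ≤ 1/(R:ℝ) - 1/((R:ℝ)+1) := by
        rw [div_sub_div _ _ (ne_of_gt hR0) (ne_of_gt hR1)]
        rw [div_le_div_iff₀ (by positivity) (by positivity)]
        push_cast
        nlinarith
      push_cast at ih h2 ⊢
      linarith
  rcases Nat.eq_zero_or_pos R with h | h
  · simp [h]
  · have := key R h
    have : (0:ℝ) < R := by exact_mod_cast h
    linarith [key R h, one_div_pos.mpr this]

lemma shell_card (d r : ℕ) (hd : 1 ≤ d) :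
    (((Fintype.piFinset (fun _ : Fin d => Finset.Icc (-(r:ℤ)) (r:ℤ)))).filter
      (fun w => ∃ i, (w i).natAbs = r)).card ≤ 2 * d * (2*r+1)^(d-1) := by
  classical
  set T : Fin d → Finset (Fin d → ℤ) := fun i =>
    Fintype.piFinset (fun i' => if i' = i then ({-(r:ℤ), (r:ℤ)} : Finset ℤ)
      else Finset.Icc (-(r:ℤ)) (r:ℤ)) with hT
  have hsub : (((Fintype.piFinset (fun _ : Fin d => Finset.Icc (-(r:ℤ)) (r:ℤ)))).filter
      (fun w => ∃ i, (w i).natAbs = r)) ⊆ Finset.univ.biUnion T := by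
    intro w hw
    rw [Finset.mem_filter] at hw
    obtain ⟨hmem, i, hi⟩ := hw
    rw [Finset.mem_biUnion]
    refine ⟨i, Finset.mem_univ i, ?_⟩
    rw [Fintype.mem_piFinset]
    intro i'
    by_cases h : i' = i
    · subst h
      rw [if_pos rfl]
      rcases Int.natAbs_eq_iff.mp hi with h' | h'
      · simp [h']
      · simp [h']
    · rw [if_neg h]
      exact Fintype.mem_piFinset.mp hmem i'
  calc _ ≤ (Finset.univ.biUnion T).card := Finset.card_le_card hsub
  _ ≤ ∑ i : Fin d, (T i).card := Finset.card_biUnion_le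
  _ ≤ ∑ _i : Fin d, 2 * (2*r+1)^(d-1) := by
      apply Finset.sum_le_sum
      intro i _
      rw [hT]
      rw [Fintype.card_piFinset]
      rw [← Finset.mul_prod_erase Finset.univ _ (Finset.mem_univ i)]
      apply Nat.mul_le_mul
      · rw [if_pos rfl]
        exact (Finset.card_insert_le _ _).trans (by simp)
      · have : ∀ i' ∈ Finset.univ.erase i,
            ((if i' = i then ({-(r:ℤ), (r:ℤ)} : Finset ℤ)
              else Finset.Icc (-(r:ℤ)) (r:ℤ))).card = 2*r+1 := by
          intro i' hi'
          rw [if_neg (Finset.ne_of_mem_erase hi')]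
          rw [Int.card_Icc]
          omega
        rw [Finset.prod_congr rfl this, Finset.prod_const]
        apply Nat.pow_le_pow_right (by omega)
        simp [Finset.card_erase_of_mem]
  _ = 2 * d * (2*r+1)^(d-1) := by
      rw [Finset.sum_const, Finset.card_univ, Fintype.card_fin]
      ring


lemma term_bound (d k m r : ℕ) (hd : 2 ≤ d) (hk : d+2 ≤ k) (hr : 1 ≤ r) :
    ((2*d*(2*r+1)^(d-1) : ℕ) : ℝ) * ((m:ℝ)^d * (3*(m:ℝ)/(r:ℝ))^(k-1)) ≤
      (2*(d:ℝ)*3^(d+k)) * (m:ℝ)^(d+k-1) * (1/(r:ℝ)^2) := by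
  have hrR : (1:ℝ) ≤ (r:ℝ) := by exact_mod_cast hr
  have hr0 : (0:ℝ) < (r:ℝ) := by linarith
  have hm0 : (0:ℝ) ≤ (m:ℝ) := by positivity
  have hL : ((2*d*(2*r+1)^(d-1) : ℕ) : ℝ) * ((m:ℝ)^d * (3*(m:ℝ)/(r:ℝ))^(k-1)) =
      (((2*d*(2*r+1)^(d-1) : ℕ) : ℝ) * ((m:ℝ)^d * (3*(m:ℝ))^(k-1))) / (r:ℝ)^(k-1) := by
    rw [div_pow]; ring
  have hR : (2*(d:ℝ)*3^(d+k)) * (m:ℝ)^(d+k-1) * (1/(r:ℝ)^2) =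
      ((2*(d:ℝ)*3^(d+k)) * (m:ℝ)^(d+k-1)) / (r:ℝ)^2 := by ring
  rw [hL, hR, div_le_div_iff₀ (by positivity) (by positivity)]
  push_cast
  have e2 : ((2*(r:ℝ)+1))^(d-1) ≤ (3*(r:ℝ))^(d-1) :=
    pow_le_pow_left₀ (by linarith) (by linarith) _
  have e3 : (3:ℝ)^(d-1) * 3^(k-1) ≤ 3^(d+k) := by
    rw [← pow_add]
    exact pow_le_pow_right₀ (by norm_num) (by omega)
  have e5 : (r:ℝ)^(d-1) * (r:ℝ)^2 ≤ (r:ℝ)^(k-1) := by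
    rw [← pow_add]
    exact pow_le_pow_right₀ hrR (by omega)
  have e1 : (m:ℝ)^d * (m:ℝ)^(k-1) = (m:ℝ)^(d+k-1) := by
    rw [← pow_add]; congr 1; omega
  calc 2*(d:ℝ)*(2*(r:ℝ)+1)^(d-1) * ((m:ℝ)^d * (3*(m:ℝ))^(k-1)) * (r:ℝ)^2
      = (2*(d:ℝ)) * ((2*(r:ℝ)+1)^(d-1) * ((r:ℝ)^2 * ((m:ℝ)^d * ((3:ℝ)^(k-1) * (m:ℝ)^(k-1))))) := by
        rw [mul_pow]; ring
    _ ≤ (2*(d:ℝ)) * ((3*(r:ℝ))^(d-1) * ((r:ℝ)^2 * ((m:ℝ)^d * ((3:ℝ)^(k-1) * (m:ℝ)^(k-1))))) := by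
        gcongr
    _ = (2*(d:ℝ)) * ((3:ℝ)^(d-1) * (3:ℝ)^(k-1)) * ((m:ℝ)^d * (m:ℝ)^(k-1)) * ((r:ℝ)^(d-1) * (r:ℝ)^2) := by
        rw [mul_pow]; ring
    _ ≤ (2*(d:ℝ)) * (3:ℝ)^(d+k) * ((m:ℝ)^d * (m:ℝ)^(k-1)) * ((r:ℝ)^(k-1)) := by
        gcongr
    _ = 2*(d:ℝ)*3^(d+k) * (m:ℝ)^(d+k-1) * (r:ℝ)^(k-1) := by rw [e1]


theorem inj_step (d k m : ℕ) (hd : 2 ≤ d) (hk : d + 2 ≤ k) (hm : 2 ≤ m) :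
    collinearTuples d k m ≤
      (((Fintype.piFinset fun _ : Fin d => Finset.Ico (0:ℤ) (m:ℤ)) ×ˢ
       (Fintype.piFinset fun _ : Fin d => Finset.Icc (-((m:ℤ)-1)) ((m:ℤ)-1)) ×ˢ
       (Fintype.piFinset fun _ : Fin k => Finset.Icc (-((m:ℤ)-1)) ((m:ℤ)-1))).filter
      (fun x => x.2.1 ≠ 0 ∧ x.2.2 ⟨0, by omega⟩ = 0 ∧
        ∀ j i, |x.2.2 j * x.2.1 i| ≤ (m:ℤ) - 1)).card := by
  classical
  set j0 : Fin k := ⟨0, by omega⟩ with hj0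
  set j1 : Fin k := ⟨1, by omega⟩ with hj1
  have hne : j0 ≠ j1 := by simp [hj0, hj1, Fin.ext_iff]
  set S := (((Fintype.piFinset fun _ : Fin d => Finset.Ico (0:ℤ) (m:ℤ)) ×ˢ
       (Fintype.piFinset fun _ : Fin d => Finset.Icc (-((m:ℤ)-1)) ((m:ℤ)-1)) ×ˢ
       (Fintype.piFinset fun _ : Fin k => Finset.Icc (-((m:ℤ)-1)) ((m:ℤ)-1))).filter
      (fun x => x.2.1 ≠ 0 ∧ x.2.2 j0 = 0 ∧
        ∀ j i, |x.2.2 j * x.2.1 i| ≤ (m:ℤ) - 1)) with hS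
  rw [collinearTuples, ← Nat.card_eq_finsetCard]
  have hex : ∀ F : {f : Fin k → (Fin d → ℤ) // Function.Injective f ∧
      (∀ j i, 0 ≤ f j i ∧ f j i < (m : ℤ)) ∧
      Collinear ℝ (Set.range (fun j => fun i => ((f j i : ℝ))))},
      ∃ wn : (Fin d → ℤ) × (Fin k → ℤ),
      wn.1 ≠ 0 ∧ (∀ i, |wn.1 i| ≤ (m : ℤ) - 1) ∧
      wn.2 j0 = 0 ∧ (∀ j, |wn.2 j| ≤ (m : ℤ) - 1) ∧
      (∀ j i, |wn.2 j * wn.1 i| ≤ (m : ℤ) - 1) ∧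
      (∀ j i, F.1 j i = F.1 j0 i + wn.2 j * wn.1 i) :=
    fun F => exists_dir m j0 j1 hne F.1 F.2.1 F.2.2.1 F.2.2.2
  choose wn h1 h2 h3 h4 h5 h6 using hex
  have hmem : ∀ F, (F.1 j0, wn F) ∈ S := by
    intro F
    rw [hS, Finset.mem_filter]
    refine ⟨?_, h1 F, h3 F, h5 F⟩
    rw [Finset.mem_product]
    constructor
    · rw [Fintype.mem_piFinset]
      intro i
      rw [Finset.mem_Ico]
      exact F.2.2.1 j0 i
    rw [Finset.mem_product]
    constructor
    · rw [Fintype.mem_piFinset]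
      intro i
      rw [Finset.mem_Icc, ← abs_le]
      exact h2 F i
    · rw [Fintype.mem_piFinset]
      intro j
      rw [Finset.mem_Icc, ← abs_le]
      exact h4 F j
  apply Nat.card_le_card_of_injective
    (fun F => (⟨(F.1 j0, wn F), hmem F⟩ : {x // x ∈ S}))
  intro F F' hFF'
  have h : (F.1 j0, wn F) = (F'.1 j0, wn F') := congrArg Subtype.val hFF'
  rw [Prod.mk.injEq] at h
  obtain ⟨e0, e1⟩ := h
  apply Subtype.ext
  funext j i
  rw [h6 F j i, h6 F' j i, e0, e1]


theorem count_step (d k m : ℕ) (hd : 2 ≤ d) (hk : d + 2 ≤ k) (hm : 2 ≤ m) :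
    ((((Fintype.piFinset fun _ : Fin d => Finset.Ico (0:ℤ) (m:ℤ)) ×ˢ
       (Fintype.piFinset fun _ : Fin d => Finset.Icc (-((m:ℤ)-1)) ((m:ℤ)-1)) ×ˢ
       (Fintype.piFinset fun _ : Fin k => Finset.Icc (-((m:ℤ)-1)) ((m:ℤ)-1))).filter
      (fun x => x.2.1 ≠ 0 ∧ x.2.2 ⟨0, by omega⟩ = 0 ∧
        ∀ j i, |x.2.2 j * x.2.1 i| ≤ (m:ℤ) - 1)).card : ℝ) ≤
      (4*(d:ℝ)*3^(d+k)) * (m:ℝ)^(d+k-1) := by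
  classical
  set j0 : Fin k := ⟨0, by omega⟩ with hj0
  set B : (Fin d → ℤ) → ℕ := fun w => Finset.univ.sup (fun i => (w i).natAbs) with hB
  set Wt : Finset (Fin d → ℤ) :=
    (Fintype.piFinset fun _ : Fin d => Finset.Icc (-((m:ℤ)-1)) ((m:ℤ)-1)).filter
      (fun w => w ≠ 0) with hWt
  set S := (((Fintype.piFinset fun _ : Fin d => Finset.Ico (0:ℤ) (m:ℤ)) ×ˢ
       (Fintype.piFinset fun _ : Fin d => Finset.Icc (-((m:ℤ)-1)) ((m:ℤ)-1)) ×ˢ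
       (Fintype.piFinset fun _ : Fin k => Finset.Icc (-((m:ℤ)-1)) ((m:ℤ)-1))).filter
      (fun x => x.2.1 ≠ 0 ∧ x.2.2 j0 = 0 ∧
        ∀ j i, |x.2.2 j * x.2.1 i| ≤ (m:ℤ) - 1)) with hS
  -- basic facts about B on Wt
  have hB1 : ∀ w ∈ Wt, 1 ≤ B w := by
    intro w hw
    rw [hWt, Finset.mem_filter] at hw
    obtain ⟨i, hi⟩ : ∃ i, w i ≠ 0 := by
      by_contra h; push_neg at h; exact hw.2 (funext h)
    calc 1 ≤ (w i).natAbs := by omega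
    _ ≤ B w := by simp only [hB]; exact Finset.le_sup (f := fun i => (w i).natAbs) (Finset.mem_univ i)
  have hBm : ∀ w ∈ Wt, B w ≤ m - 1 := by
    intro w hw
    rw [hWt, Finset.mem_filter] at hw
    simp only [hB]
    apply Finset.sup_le
    intro i _
    have := Fintype.mem_piFinset.mp hw.1 i
    rw [Finset.mem_Icc] at this
    omega
  haveI : Nonempty (Fin d) := ⟨⟨0, by omega⟩⟩
  have hBw : ∀ w, ∃ i, B w = (w i).natAbs := by
    intro w
    obtain ⟨i, -, hi⟩ := Finset.exists_mem_eq_sup Finset.univ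
      (Finset.univ_nonempty) (fun i => (w i).natAbs)
    exact ⟨i, by simp only [hB]; exact hi⟩
  have hBub : ∀ w, ∀ i, (w i).natAbs ≤ B w := fun w i => by
    simp only [hB]; exact Finset.le_sup (f := fun i => (w i).natAbs) (Finset.mem_univ i)
  -- fiber decomposition
  have hmapsto : ∀ x ∈ S, x.2.1 ∈ Wt := by
    intro x hx
    rw [hS, Finset.mem_filter] at hx
    obtain ⟨hxp, hx0, -, -⟩ := hx
    rw [Finset.mem_product] at hxp
    have := (Finset.mem_product.mp hxp.2).1
    rw [hWt, Finset.mem_filter]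
    exact ⟨this, hx0⟩
  have hfib : S.card = ∑ w ∈ Wt, (S.filter (fun x => x.2.1 = w)).card :=
    Finset.card_eq_sum_card_fiberwise hmapsto
  -- bound each fiber
  have hfibcard : ∀ w ∈ Wt, ((S.filter (fun x => x.2.1 = w)).card : ℝ) ≤
      (m:ℝ)^d * (3*(m:ℝ)/(B w : ℝ))^(k-1) := by
    intro w hw
    have hB1w := hB1 w hw
    have hBmw := hBm w hw
    have hBpos : (0:ℤ) < (B w : ℤ) := by exact_mod_cast hB1w
    obtain ⟨istar, histar⟩ := hBw w
    set q : ℤ := ((m:ℤ)-1) / (B w : ℤ) with hq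
    have hq1 : 1 ≤ q := by
      rw [hq, Int.le_ediv_iff_mul_le hBpos]
      have : (B w : ℤ) ≤ (m:ℤ) - 1 := by
        have : ((B w : ℕ) : ℤ) ≤ ((m - 1 : ℕ) : ℤ) := by exact_mod_cast hBmw
        omega
      omega
    have hqB : q * (B w : ℤ) ≤ (m:ℤ) - 1 := Int.ediv_mul_le _ (ne_of_gt hBpos)
    have hsub : S.filter (fun x => x.2.1 = w) ⊆
        (Fintype.piFinset fun _ : Fin d => Finset.Ico (0:ℤ) (m:ℤ)) ×ˢ
        ({w} : Finset (Fin d → ℤ)) ×ˢ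
        (Fintype.piFinset fun j : Fin k =>
          if j = j0 then ({0} : Finset ℤ) else Finset.Icc (-q) q) := by
      intro x hx
      rw [Finset.mem_filter] at hx
      obtain ⟨hxS, hxw⟩ := hx
      rw [hS, Finset.mem_filter] at hxS
      obtain ⟨hxprod, hx0, hxj0, hxb⟩ := hxS
      rw [Finset.mem_product] at hxprod
      obtain ⟨hp, hrest⟩ := hxprod
      rw [Finset.mem_product]
      refine ⟨hp, ?_⟩
      rw [Finset.mem_product]
      refine ⟨by simp [hxw], ?_⟩
      rw [Fintype.mem_piFinset]
      intro j
      by_cases hj : j = j0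
      · rw [if_pos hj, hj, Finset.mem_singleton]
        exact hxj0
      · rw [if_neg hj, Finset.mem_Icc, ← abs_le]
        rw [hq, Int.le_ediv_iff_mul_le hBpos]
        have h5 := hxb j istar
        rw [hxw, abs_mul] at h5
        have heq : ((B w : ℤ)) = |w istar| := by
          rw [histar]; exact (Int.abs_eq_natAbs _).symm
        rw [heq]
        exact h5
    have hcard : (S.filter (fun x => x.2.1 = w)).card ≤ m^d * (2*q+1).toNat^(k-1) := by
      refine (Finset.card_le_card hsub).trans ?_
      rw [Finset.card_product, Finset.card_product, Finset.card_singleton,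
        Fintype.card_piFinset, Fintype.card_piFinset]
      apply Nat.mul_le_mul
      · apply Nat.le_of_eq
        have : ∀ i ∈ (Finset.univ : Finset (Fin d)), (Finset.Ico (0:ℤ) (m:ℤ)).card = m := by
          intro i _
          rw [Int.card_Ico]
          omega
        rw [Finset.prod_congr rfl this, Finset.prod_const, Finset.card_univ, Fintype.card_fin]
      · rw [one_mul]
        rw [← Finset.mul_prod_erase Finset.univ _ (Finset.mem_univ j0)]
        rw [if_pos rfl, Finset.card_singleton, one_mul]
        have : ∀ j ∈ Finset.univ.erase j0,
            ((if j = j0 then ({0} : Finset ℤ) else Finset.Icc (-q) q)).card = (2*q+1).toNat := by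
          intro j hj
          rw [if_neg (Finset.ne_of_mem_erase hj), Int.card_Icc]
          omega
        rw [Finset.prod_congr rfl this, Finset.prod_const]
        apply Nat.pow_le_pow_right (by omega)
        rw [Finset.card_erase_of_mem (Finset.mem_univ j0), Finset.card_univ, Fintype.card_fin]
    -- now to reals
    have hBRpos : (0:ℝ) < (B w : ℝ) := by exact_mod_cast hB1w
    have hqR : ((2*q+1).toNat : ℝ) ≤ 3*(m:ℝ)/(B w : ℝ) := by
      have h0 : (((2*q+1).toNat : ℕ) : ℤ) = 2*q+1 := Int.toNat_of_nonneg (by omega)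
      have h1 : ((2*q+1).toNat : ℝ) = ((2*q+1 : ℤ) : ℝ) := by exact_mod_cast h0
      rw [h1, le_div_iff₀ hBRpos]
      have h2 : ((2*q+1 : ℤ) : ℝ) * (B w : ℝ) = ((((2*q+1) * (B w : ℤ)) : ℤ) : ℝ) := by
        push_cast; ring
      rw [h2]
      have h3 : ((2*q+1) * (B w : ℤ)) ≤ 3*(m:ℤ) := by
        nlinarith [hq1, hBpos, hqB]
      calc ((((2*q+1) * (B w : ℤ)) : ℤ) : ℝ) ≤ ((3*(m:ℤ) : ℤ) : ℝ) := by exact_mod_cast h3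
      _ = 3*(m:ℝ) := by push_cast; ring
    calc ((S.filter (fun x => x.2.1 = w)).card : ℝ) ≤ ((m^d * (2*q+1).toNat^(k-1) : ℕ) : ℝ) := by
          exact_mod_cast hcard
    _ = (m:ℝ)^d * (((2*q+1).toNat : ℝ))^(k-1) := by push_cast; try ring
    _ ≤ (m:ℝ)^d * (3*(m:ℝ)/(B w : ℝ))^(k-1) := by
        gcongr
  -- sum over fibers, then group by the value of B
  have step1 : (S.card : ℝ) ≤ ∑ w ∈ Wt, (m:ℝ)^d * (3*(m:ℝ)/(B w : ℝ))^(k-1) := by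
    rw [hfib]
    push_cast
    exact Finset.sum_le_sum hfibcard
  have hmaps2 : ∀ w ∈ Wt, B w ∈ Finset.Icc 1 (m-1) := by
    intro w hw
    rw [Finset.mem_Icc]
    exact ⟨hB1 w hw, hBm w hw⟩
  have step2 : ∑ w ∈ Wt, (m:ℝ)^d * (3*(m:ℝ)/(B w : ℝ))^(k-1) =
      ∑ r ∈ Finset.Icc 1 (m-1), ∑ w ∈ Wt.filter (fun w => B w = r),
        (m:ℝ)^d * (3*(m:ℝ)/(B w : ℝ))^(k-1) :=
    (Finset.sum_fiberwise_of_maps_to hmaps2 _).symm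
  have step3 : ∀ r ∈ Finset.Icc 1 (m-1),
      ∑ w ∈ Wt.filter (fun w => B w = r), (m:ℝ)^d * (3*(m:ℝ)/(B w : ℝ))^(k-1) ≤
      (2*(d:ℝ)*3^(d+k)) * (m:ℝ)^(d+k-1) * (1/(r:ℝ)^2) := by
    intro r hr
    rw [Finset.mem_Icc] at hr
    have hinner : ∑ w ∈ Wt.filter (fun w => B w = r), (m:ℝ)^d * (3*(m:ℝ)/(B w : ℝ))^(k-1) =
        ((Wt.filter (fun w => B w = r)).card : ℝ) * ((m:ℝ)^d * (3*(m:ℝ)/(r : ℝ))^(k-1)) := by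
      rw [Finset.sum_congr rfl (fun w hw => by
        rw [(Finset.mem_filter.mp hw).2]), Finset.sum_const, nsmul_eq_mul]
    rw [hinner]
    have hshell : (Wt.filter (fun w => B w = r)).card ≤ 2 * d * (2*r+1)^(d-1) := by
      refine (Finset.card_le_card ?_).trans (shell_card d r (by omega))
      intro w hw
      rw [Finset.mem_filter] at hw ⊢
      obtain ⟨hw1, hw2⟩ := hw
      constructor
      · rw [Fintype.mem_piFinset]
        intro i
        have := hBub w i
        rw [hw2] at this
        rw [Finset.mem_Icc]
        omega
      · obtain ⟨i, hi⟩ := hBw w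
        exact ⟨i, by omega⟩
    calc ((Wt.filter (fun w => B w = r)).card : ℝ) * ((m:ℝ)^d * (3*(m:ℝ)/(r : ℝ))^(k-1))
        ≤ ((2 * d * (2*r+1)^(d-1) : ℕ) : ℝ) * ((m:ℝ)^d * (3*(m:ℝ)/(r : ℝ))^(k-1)) := by
          apply mul_le_mul_of_nonneg_right (by exact_mod_cast hshell)
          positivity
      _ ≤ (2*(d:ℝ)*3^(d+k)) * (m:ℝ)^(d+k-1) * (1/(r:ℝ)^2) :=
          term_bound d k m r hd hk hr.1
  calc (S.card : ℝ) ≤ ∑ w ∈ Wt, (m:ℝ)^d * (3*(m:ℝ)/(B w : ℝ))^(k-1) := step1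
    _ = ∑ r ∈ Finset.Icc 1 (m-1), ∑ w ∈ Wt.filter (fun w => B w = r),
        (m:ℝ)^d * (3*(m:ℝ)/(B w : ℝ))^(k-1) := step2
    _ ≤ ∑ r ∈ Finset.Icc 1 (m-1), (2*(d:ℝ)*3^(d+k)) * (m:ℝ)^(d+k-1) * (1/(r:ℝ)^2) :=
        Finset.sum_le_sum step3
    _ = (2*(d:ℝ)*3^(d+k)) * (m:ℝ)^(d+k-1) * ∑ r ∈ Finset.Icc 1 (m-1), (1/(r:ℝ)^2) := by
        rw [Finset.mul_sum]
    _ ≤ (2*(d:ℝ)*3^(d+k)) * (m:ℝ)^(d+k-1) * 2 := by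
        apply mul_le_mul_of_nonneg_left (sum_inv_sq_le (m-1))
        positivity
    _ = (4*(d:ℝ)*3^(d+k)) * (m:ℝ)^(d+k-1) := by ring


/-- For `k ≥ d + 2`, the number of collinear `k`-tuples in `[m]^d` is `O(m^{d+k-1})`. -/
theorem stmt2 (d k : ℕ) (hd : 2 ≤ d) (hk : d + 2 ≤ k) :
    ∃ C : ℝ, 0 < C ∧ ∀ m : ℕ, 2 ≤ m →
      (collinearTuples d k m : ℝ) ≤ C * (m : ℝ) ^ (d + k - 1) := by
  refine ⟨4*(d:ℝ)*3^(d+k), ?_, ?_⟩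
  · have hd0 : (0:ℝ) < (d:ℝ) := by exact_mod_cast (by omega : 0 < d)
    positivity
  intro m hm
  have h1 := inj_step d k m hd hk hm
  have h2 := count_step d k m hd hk hm
  calc (collinearTuples d k m : ℝ)
      ≤ _ := by exact_mod_cast h1
    _ ≤ (4*(d:ℝ)*3^(d+k)) * (m:ℝ)^(d+k-1) := h2
end

section
/- Let d ≥ 2 and let a_1,...,a_d ∈ Z, not all zero, with gcd(a_1,...,a_d) = 1. Let L = {x ∈ Z^d : a_1 x_1 + ... + a_d x_d = 0}, let s = max_i |a_i|, and let m ≥ s be a positive integer. If L ∩ [m]^d spans a (d−1)-dimensional subspace of R^d, then |L ∩ [m]^d| ≤ 3^d · m^{d−1}/s. -/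
/-- Bézout for finite families of integers. -/
lemma finset_gcd_bezout {ι : Type*} [DecidableEq ι] (t : Finset ι) (f : ι → ℤ) :
    ∃ c : ι → ℤ, ∑ i ∈ t, c i * f i = t.gcd f := by
  classical
  induction t using Finset.induction_on with
  | empty => exact ⟨0, by simp⟩
  | @insert i t' hi ih =>
    obtain ⟨c, hc⟩ := ih
    refine ⟨fun j => if j = i then Int.gcdA (f i) (t'.gcd f)
      else Int.gcdB (f i) (t'.gcd f) * c j, ?_⟩
    rw [Finset.sum_insert hi, Finset.gcd_insert]
    have h1 : ∑ j ∈ t', (if j = i then Int.gcdA (f i) (t'.gcd f)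
        else Int.gcdB (f i) (t'.gcd f) * c j) * f j
        = Int.gcdB (f i) (t'.gcd f) * ∑ j ∈ t', c j * f j := by
      rw [Finset.mul_sum]
      refine Finset.sum_congr rfl fun j hj => ?_
      rw [if_neg (show ¬ j = i from fun h => hi (h ▸ hj)), mul_assoc]
    rw [h1, hc, ← Int.coe_gcd, Int.gcd_eq_gcd_ab]
    simp only [if_true, ite_true, if_pos]
    ring

/-- If the points of the hyperplane `a · x = 0` (with `gcd` of the coefficients
equal to `1`) inside the grid `[m]^d` span a `(d-1)`-dimensional subspace, then
there are at most `3^d m^{d-1} / s` of them, where `s = max |a_i|`. -/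
theorem stmt5 (d : ℕ) (hd : 2 ≤ d) (a : Fin d → ℤ) (ha : a ≠ 0)
    (hgcd : Finset.univ.gcd a = 1) (s m : ℕ)
    (hs : s = Finset.univ.sup fun i => (a i).natAbs) (hm : s ≤ m) (hm1 : 1 ≤ m)
    (L : Set (Fin d → ℤ))
    (hL : L = {x : Fin d → ℤ | (∑ i, a i * x i) = 0 ∧ ∀ i, 0 ≤ x i ∧ x i < (m : ℤ)})
    (hspan : Module.finrank ℝ
      (Submodule.span ℝ ((fun x : Fin d → ℤ => fun i => ((x i : ℝ))) '' L)) = d - 1) :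
    Nat.card L * s ≤ 3 ^ d * m ^ (d - 1) := by
  classical
  clear hspan
  -- pick i₀ realizing the sup
  have hne : (Finset.univ : Finset (Fin d)).Nonempty := ⟨⟨0, by omega⟩, Finset.mem_univ _⟩
  obtain ⟨i₀, -, hi₀⟩ := Finset.exists_mem_eq_sup Finset.univ hne fun i => (a i).natAbs
  have hi₀s : (a i₀).natAbs = s := by rw [hs, hi₀]
  have hs0 : 0 < s := by
    obtain ⟨i, hi⟩ := Function.ne_iff.mp ha
    have h1 : 1 ≤ (a i).natAbs := Int.natAbs_pos.mpr hi
    have h2 : (a i).natAbs ≤ s := by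
      rw [hs]; exact Finset.le_sup (f := fun i => (a i).natAbs) (Finset.mem_univ i)
    omega
  have hsZ : (0 : ℤ) < (s : ℤ) := by exact_mod_cast hs0
  have habs : a i₀ = (s : ℤ) ∨ a i₀ = -(s : ℤ) := by
    rcases Int.natAbs_eq (a i₀) with h | h
    · left; rw [h, hi₀s]
    · right; rw [h, hi₀s]
  have hai₀ : a i₀ ≠ 0 := by
    rcases habs with h | h <;> rw [h] <;> omega
  -- Bézout coefficients
  obtain ⟨c, hc⟩ := finset_gcd_bezout Finset.univ a
  rw [hgcd] at hc
  set ε : ℤ := if a i₀ = (s : ℤ) then 1 else -1 with hε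
  have hεa : ε * (s : ℤ) = a i₀ := by
    rcases habs with h | h
    · rw [hε, if_pos h, one_mul, h]
    · have hne' : a i₀ ≠ (s : ℤ) := by rw [h]; omega
      rw [hε, if_neg hne', h]; ring
  have hεε : ε * ε = 1 := by
    rcases habs with h | h
    · rw [hε, if_pos h]; ring
    · rw [hε, if_neg (by rw [h]; omega)]; ring
  -- shift vectors v k with a · v k = k and coordinates 0 ≤ v k j < s off i₀
  set v : ℕ → Fin d → ℤ := fun k j =>
    if j = i₀ then (k : ℤ) * c i₀ + ε * ∑ l ∈ Finset.univ.erase i₀, a l * (((k : ℤ) * c l) / s)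
    else ((k : ℤ) * c j) % s with hv
  have hv1 : ∀ k : ℕ, ∀ j, j ≠ i₀ → v k j = ((k : ℤ) * c j) % s := by
    intro k j hj; simp [hv, hj]
  have hv2 : ∀ k : ℕ, v k i₀
      = (k : ℤ) * c i₀ + ε * ∑ l ∈ Finset.univ.erase i₀, a l * (((k : ℤ) * c l) / s) := by
    intro k; simp [hv]
  have hv_off : ∀ k, ∀ j, j ≠ i₀ → 0 ≤ v k j ∧ v k j < (s : ℤ) := by
    intro k j hj
    rw [hv1 k j hj]
    exact ⟨Int.emod_nonneg _ (by omega), Int.emod_lt_of_pos _ hsZ⟩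
  have hv_sum : ∀ k : ℕ, ∑ j, a j * v k j = (k : ℤ) := by
    intro k
    rw [← Finset.add_sum_erase _ _ (Finset.mem_univ i₀)]
    have h1 : ∑ j ∈ Finset.univ.erase i₀, a j * v k j
        = ∑ j ∈ Finset.univ.erase i₀, (a j * ((k : ℤ) * c j)
            - (s : ℤ) * (a j * (((k : ℤ) * c j) / s))) := by
      refine Finset.sum_congr rfl fun j hj => ?_
      rw [hv1 k j (Finset.mem_erase.mp hj).1, Int.emod_def]; ring
    have h2 : a i₀ * v k i₀ = a i₀ * ((k : ℤ) * c i₀)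
        + (s : ℤ) * ∑ l ∈ Finset.univ.erase i₀, a l * (((k : ℤ) * c l) / s) := by
      have h5 : a i₀ * (ε * ∑ l ∈ Finset.univ.erase i₀, a l * (((k : ℤ) * c l) / s))
          = (s : ℤ) * ∑ l ∈ Finset.univ.erase i₀, a l * (((k : ℤ) * c l) / s) := by
        calc a i₀ * (ε * ∑ l ∈ Finset.univ.erase i₀, a l * (((k : ℤ) * c l) / s))
            = (ε * ε) * ((s:ℤ) * ∑ l ∈ Finset.univ.erase i₀, a l * (((k : ℤ) * c l) / s)) := by
              rw [← hεa]; ring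
          _ = (s:ℤ) * ∑ l ∈ Finset.univ.erase i₀, a l * (((k : ℤ) * c l) / s) := by
              rw [hεε, one_mul]
      rw [hv2 k, mul_add, h5]
    rw [h1, h2, Finset.sum_sub_distrib, ← Finset.mul_sum]
    have h3 : a i₀ * ((k : ℤ) * c i₀) + ∑ j ∈ Finset.univ.erase i₀, a j * ((k : ℤ) * c j)
        = (k : ℤ) * ∑ j, c j * a j := by
      rw [Finset.mul_sum,
        ← Finset.add_sum_erase _ (fun j => (k:ℤ) * (c j * a j)) (Finset.mem_univ i₀)]
      congr 1
      · ring
      · exact Finset.sum_congr rfl fun j _ => by ring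
    rw [hc, mul_one] at h3
    linarith [h3]
  -- the injection
  set T := ({j : Fin d // j ≠ i₀} → Fin (2 * m)) with hT
  have hxL : ∀ x : Fin d → ℤ, x ∈ L → (∑ i, a i * x i) = 0 ∧ ∀ i, 0 ≤ x i ∧ x i < (m : ℤ) := by
    intro x hx; rw [hL] at hx; exact hx
  set F : L × Fin s → T := fun p j =>
    ⟨((p.1 : Fin d → ℤ) j.1 + v p.2.1 j.1).toNat, by
      obtain ⟨⟨x, hx⟩, k⟩ := p
      have h1 := (hxL x hx).2 j.1
      have h2 := hv_off k.1 j.1 j.2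
      have hsm : (s : ℤ) ≤ (m : ℤ) := by exact_mod_cast hm
      simp only
      omega⟩ with hF
  have hFinj : Function.Injective F := by
    rintro ⟨⟨x, hx⟩, k⟩ ⟨⟨x', hx'⟩, k'⟩ h
    -- coordinates off i₀ agree
    have hcoord : ∀ j : Fin d, j ≠ i₀ → x j + v k.1 j = x' j + v k'.1 j := by
      intro j hj
      have h0 := congrFun h ⟨j, hj⟩
      have heq : ((x j + v k.1 j).toNat : ℤ) = ((x' j + v k'.1 j).toNat : ℤ) := by
        exact_mod_cast congrArg Fin.val h0
      have h1 := (hxL x hx).2 j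
      have h2 := hv_off k.1 j hj
      have h1' := (hxL x' hx').2 j
      have h2' := hv_off k'.1 j hj
      omega
    have hy : ∑ j, a j * (x j + v k.1 j) = (k.1 : ℤ) := by
      have hz := (hxL x hx).1
      simp only [mul_add, Finset.sum_add_distrib, hz, hv_sum k.1, zero_add]
    have hy' : ∑ j, a j * (x' j + v k'.1 j) = (k'.1 : ℤ) := by
      have hz := (hxL x' hx').1
      simp only [mul_add, Finset.sum_add_distrib, hz, hv_sum k'.1, zero_add]
    have hdiff : a i₀ * ((x i₀ + v k.1 i₀) - (x' i₀ + v k'.1 i₀)) = (k.1 : ℤ) - (k'.1 : ℤ) := by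
      rw [← hy, ← hy', ← Finset.sum_sub_distrib,
        ← Finset.add_sum_erase _ (fun j => a j * (x j + v k.1 j) - a j * (x' j + v k'.1 j))
          (Finset.mem_univ i₀)]
      have hz : ∑ j ∈ Finset.univ.erase i₀,
          (a j * (x j + v k.1 j) - a j * (x' j + v k'.1 j)) = 0 := by
        refine Finset.sum_eq_zero fun j hj => ?_
        rw [hcoord j (Finset.mem_erase.mp hj).1]; ring
      rw [hz, add_zero]; ring
    -- |k - k'| < s = |a i₀| forces equality
    have hk1 : ((k.1 : ℤ)) < (s : ℤ) := by exact_mod_cast k.2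
    have hk2 : ((k'.1 : ℤ)) < (s : ℤ) := by exact_mod_cast k'.2
    have hdvd : (s : ℤ) ∣ ((k.1 : ℤ) - (k'.1 : ℤ)) := by
      have hd1 : a i₀ ∣ ((k.1 : ℤ) - (k'.1 : ℤ)) := ⟨_, hdiff.symm⟩
      have hd2 := Int.natAbs_dvd.mpr hd1
      rwa [hi₀s] at hd2
    have habslt : |((k.1 : ℤ) - (k'.1 : ℤ))| < (s : ℤ) := by
      rw [abs_lt]; omega
    have hzero := Int.eq_zero_of_abs_lt_dvd hdvd habslt
    have hD : x i₀ + v k.1 i₀ = x' i₀ + v k'.1 i₀ := by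
      have h6 : a i₀ * ((x i₀ + v k.1 i₀) - (x' i₀ + v k'.1 i₀)) = 0 := by omega
      rcases mul_eq_zero.mp h6 with h7 | h7
      · exact absurd h7 hai₀
      · omega
    have hk : k = k' := by
      apply Fin.ext
      omega
    subst hk
    have hxx : x = x' := by
      funext j
      by_cases hj : j = i₀
      · subst hj; have := hD; omega
      · have := hcoord j hj; omega
    simp [hxx]
  -- counting
  have hcard : Nat.card (L × Fin s) ≤ Nat.card T := Nat.card_le_card_of_injective F hFinj
  have hc1 : Nat.card (L × Fin s) = Nat.card L * s := by
    rw [Nat.card_prod]; simp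
  have hsub : Fintype.card {j : Fin d // j ≠ i₀} = d - 1 := by
    rw [Fintype.card_subtype_compl, Fintype.card_fin, Fintype.card_subtype_eq]
  have hc2 : Nat.card T = (2 * m) ^ (d - 1) := by
    rw [hT, Nat.card_eq_fintype_card, Fintype.card_fun, Fintype.card_fin, hsub]
  rw [hc1, hc2] at hcard
  calc Nat.card L * s ≤ (2 * m) ^ (d - 1) := hcard
    _ = 2 ^ (d-1) * m ^ (d-1) := by rw [mul_pow]
    _ ≤ 3 ^ d * m ^ (d - 1) :=
        Nat.mul_le_mul
          (Nat.le_trans (Nat.pow_le_pow_left (by omega) _)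
            (Nat.pow_le_pow_right (by omega) (by omega)))
          (Nat.le_refl _)
end
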